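/- Let G be a t.d.l.c. group acting vertex transitively with compact open vertex stabilisers on a connected locally finite δ-hyperbolic graph Γ, and let g, h ∈ G be hyperbolic elements, each acting as a translation along a bi-infinite geodesic, with the same attracting boundary point ω₊(g) = ω₊(h). Then for vertices u₀, v₀ on the respective geodesics, the indices [gᵏG_{u₀}g⁻ᵏ : gᵏG_{u₀}g⁻ᵏ ∩ hᵏG_{v₀}h⁻ᵏ] are bounded uniformly in k ∈ ℕ. -/

import Mathlib

/-- The Gromov product on a graph, with respect to the graph metric. -/
noncomputable def gGP {V : Type*} (Γ : SimpleGraph V) (p x y : V) : ℝ :=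
  ((Γ.dist p x : ℝ) + (Γ.dist p y : ℝ) - (Γ.dist x y : ℝ)) / 2

/-- `Γ` is `δ`-hyperbolic: the four-point Gromov product condition holds. -/
def GraphHyp {V : Type*} (Γ : SimpleGraph V) (δ : ℝ) : Prop :=
  ∀ p x y z : V, min (gGP Γ p x z) (gGP Γ p y z) - δ ≤ gGP Γ p x y

/-- The sequence `u` of vertices converges at infinity (to a point of the Gromov
boundary `∂Γ`). -/
def gConvAtInf {V : Type*} (Γ : SimpleGraph V) (p : V) (u : ℕ → V) : Prop :=
  ∀ M : ℝ, ∃ N : ℕ, ∀ i j : ℕ, N ≤ i → N ≤ j → M ≤ gGP Γ p (u i) (u j)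

/-- The sequences `u` and `v` of vertices converge to the same boundary point of `∂Γ`. -/
def gEquivAtInf {V : Type*} (Γ : SimpleGraph V) (p : V) (u v : ℕ → V) : Prop :=
  ∀ M : ℝ, ∃ N : ℕ, ∀ i j : ℕ, N ≤ i → N ≤ j → M ≤ gGP Γ p (u i) (v j)

/-- The scale function on a t.d.l.c. group:
`s(g) = min{[gUg⁻¹ : gUg⁻¹ ∩ U] : U compact open subgroup}`. -/
noncomputable def scale {G : Type*} [Group G] [TopologicalSpace G] (g : G) : ℕ :=
  sInf {n : ℕ | ∃ U : Subgroup G, IsCompact (U : Set G) ∧ IsOpen (U : Set G) ∧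
    n = U.relIndex (U.map (MulAut.conj g).toMonoidHom)}

/-!
By orbit–stabiliser, `[G_x : G_x ∩ G_y]` is the size of the `G_x`-orbit of `y`, which lies in the
ball about `x` of radius `d(x, y)`; and `gᵏ` maps the ball about `u₀` onto the ball of the same
radius about `gᵏu₀`. So it suffices to bound `d(gᵏu₀, hᵏv₀)` uniformly in `k`. Both points lie at
distance `km` along geodesic lines with a common forward end; applying the four-point condition
along the chain `gᵏu₀, gⁱu₀, hⁱv₀, hᵏv₀` for `i` large gives `d(gᵏu₀, hᵏv₀) ≤ 3 d(u₀, v₀) + 4δ`.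
-/

namespace SimpleGraph

variable {V W : Type*} {Γ : SimpleGraph V}

lemma dist_map_le {Γ' : SimpleGraph W} (hconn : Γ.Connected) (f : Γ →g Γ') (u v : V) :
    Γ'.dist (f u) (f v) ≤ Γ.dist u v := by
  obtain ⟨p, hp⟩ := hconn.exists_walk_length_eq_dist u v
  simpa only [Walk.length_map, hp] using dist_le (p.map f)

lemma finite_setOf_dist_le (hconn : Γ.Connected) (hlf : ∀ v, (Γ.neighborSet v).Finite)
    (x : V) (n : ℕ) : {w | Γ.dist x w ≤ n}.Finite := by
  induction n generalizing x with
  | zero => simp [hconn.dist_eq_zero_iff]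
  | succ n ih =>
    refine ((Set.finite_singleton x).union ((hlf x).biUnion fun v _ => ih v)).subset ?_
    intro w (hw : Γ.dist x w ≤ n + 1)
    obtain ⟨p, hp⟩ := hconn.exists_walk_length_eq_dist x w
    cases p with
    | nil => exact Or.inl rfl
    | cons hadj q =>
      have hq : q.length ≤ n := by rw [Walk.length_cons] at hp; omega
      exact Or.inr (Set.mem_biUnion hadj ((dist_le q).trans hq))

section Action

variable {G : Type*} [Group G] [MulAction G V]

lemma dist_smul (hconn : Γ.Connected)
    (hact : ∀ (g : G) (u w : V), Γ.Adj u w → Γ.Adj (g • u) (g • w)) (g : G) (u v : V) :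
    Γ.dist (g • u) (g • v) = Γ.dist u v := by
  have hle : ∀ (g : G) (u v : V), Γ.dist (g • u) (g • v) ≤ Γ.dist u v := fun g =>
    dist_map_le hconn ⟨(g • ·), hact g _ _⟩
  refine (hle g u v).antisymm ?_
  simpa using hle g⁻¹ (g • u) (g • v)

lemma ncard_setOf_dist_le_smul (hconn : Γ.Connected)
    (hact : ∀ (g : G) (u w : V), Γ.Adj u w → Γ.Adj (g • u) (g • w)) (g : G) (x : V) (n : ℕ) :
    {w | Γ.dist (g • x) w ≤ n}.ncard = {w | Γ.dist x w ≤ n}.ncard := by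
  have himage : (g • ·) '' {w | Γ.dist x w ≤ n} = {w | Γ.dist (g • x) w ≤ n} := by
    ext w
    refine ⟨?_, fun hw => ⟨g⁻¹ • w, ?_, smul_inv_smul g w⟩⟩
    · rintro ⟨u, hu, rfl⟩
      simpa [dist_smul hconn hact] using hu
    · simpa [← dist_smul hconn hact g x] using hw
  rw [← himage, Set.ncard_image_of_injective _ (MulAction.injective g)]

lemma relIndex_stabilizer_le_ncard (hconn : Γ.Connected) (hlf : ∀ v, (Γ.neighborSet v).Finite)
    (hact : ∀ (g : G) (u w : V), Γ.Adj u w → Γ.Adj (g • u) (g • w))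
    {x y : V} {n : ℕ} (hxy : Γ.dist x y ≤ n) :
    (MulAction.stabilizer G y).relIndex (MulAction.stabilizer G x) ≤
      {w | Γ.dist x w ≤ n}.ncard := by
  have hsubgroupOf : (MulAction.stabilizer G y).subgroupOf (MulAction.stabilizer G x) =
      MulAction.stabilizer (MulAction.stabilizer G x) y := by
    ext a
    simp only [Subgroup.mem_subgroupOf, MulAction.mem_stabilizer_iff, Subgroup.smul_def]
  rw [Subgroup.relIndex, hsubgroupOf, MulAction.index_stabilizer]
  refine Set.ncard_le_ncard ?_ (finite_setOf_dist_le hconn hlf x n)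
  rintro _ ⟨⟨a, ha⟩, rfl⟩
  change Γ.dist x (a • y) ≤ n
  rwa [← (MulAction.mem_stabilizer_iff.mp ha : a • x = x), dist_smul hconn hact]

end Action

end SimpleGraph

section Gromov

variable {V : Type*} {Γ : SimpleGraph V}

lemma gGP_comm (p x y : V) : gGP Γ p x y = gGP Γ p y x := by
  unfold gGP
  rw [SimpleGraph.dist_comm (u := x)]
  ring

lemma dist_eq_sub_two_mul_gGP (p x y : V) :
    (Γ.dist x y : ℝ) = Γ.dist p x + Γ.dist p y - 2 * gGP Γ p x y := by
  unfold gGP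
  ring

lemma gGP_le_gGP_add_dist (hconn : Γ.Connected) (p q x y : V) :
    gGP Γ q x y ≤ gGP Γ p x y + Γ.dist p q := by
  have hx : (Γ.dist q x : ℝ) ≤ Γ.dist p q + Γ.dist p x := by
    rw [SimpleGraph.dist_comm (u := p)]
    exact_mod_cast hconn.dist_triangle
  have hy : (Γ.dist q y : ℝ) ≤ Γ.dist p q + Γ.dist p y := by
    rw [SimpleGraph.dist_comm (u := p)]
    exact_mod_cast hconn.dist_triangle
  unfold gGP
  linarith

lemma GraphHyp.min_sub_two_mul_le_gGP {δ : ℝ} (hhyp : GraphHyp Γ δ) (hδ : 0 ≤ δ)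
    (p x y z w : V) :
    min (gGP Γ p x y) (min (gGP Γ p y z) (gGP Γ p z w)) - 2 * δ ≤ gGP Γ p x w := by
  have hxw := hhyp p x w y
  have hyw := hhyp p y w z
  rw [gGP_comm p w y] at hxw
  rw [gGP_comm p w z] at hyw
  have hmin : min (gGP Γ p x y) (min (gGP Γ p y z) (gGP Γ p z w)) - δ ≤
      min (gGP Γ p x y) (gGP Γ p y w) :=
    le_min (by linarith [min_le_left (gGP Γ p x y) (min (gGP Γ p y z) (gGP Γ p z w))])
      (by linarith [min_le_right (gGP Γ p x y) (min (gGP Γ p y z) (gGP Γ p z w))])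
  linarith

def IsGeodesicLine (Γ : SimpleGraph V) (γ : ℤ → V) : Prop :=
  ∀ i j : ℤ, (Γ.dist (γ i) (γ j) : ℤ) = |i - j|

lemma IsGeodesicLine.dist_eq {γ : ℤ → V} (hγ : IsGeodesicLine Γ γ) {r s : ℤ} (hrs : r ≤ s) :
    (Γ.dist (γ r) (γ s) : ℝ) = s - r := by
  have h := hγ r s
  rw [abs_of_nonpos (by omega)] at h
  exact_mod_cast (by omega : (Γ.dist (γ r) (γ s) : ℤ) = s - r)

lemma IsGeodesicLine.gGP_eq {γ : ℤ → V} (hγ : IsGeodesicLine Γ γ) {r s t : ℤ} (hrs : r ≤ s)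
    (hst : s ≤ t) : gGP Γ (γ r) (γ s) (γ t) = s - r := by
  unfold gGP
  rw [hγ.dist_eq hrs, hγ.dist_eq (hrs.trans hst), hγ.dist_eq hst]
  ring

theorem GraphHyp.dist_le_of_gEquivAtInf {δ : ℝ} (hhyp : GraphHyp Γ δ) (hδ : 0 ≤ δ)
    (hconn : Γ.Connected) {γ η : ℤ → V} (hγ : IsGeodesicLine Γ γ) (hη : IsGeodesicLine Γ η)
    {t : ℕ → ℕ} (ht : Monotone t)
    (hsame : gEquivAtInf Γ (γ 0) (fun k => γ (t k)) (fun k => η (t k))) (k : ℕ) :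
    (Γ.dist (γ (t k)) (η (t k)) : ℝ) ≤ 3 * Γ.dist (γ 0) (η 0) + 4 * δ := by
  set D : ℝ := (Γ.dist (γ 0) (η 0) : ℝ) with hD_def
  obtain ⟨N, hN⟩ := hsame (t k)
  set i := max N k
  have htk : (0 : ℤ) ≤ t k := by positivity
  have hti : (t k : ℤ) ≤ t i := by exact_mod_cast ht (le_max_right N k)
  have hγγ : gGP Γ (γ 0) (γ (t k)) (γ (t i)) = t k := by
    simpa using hγ.gGP_eq htk hti
  have hγη : (t k : ℝ) ≤ gGP Γ (γ 0) (γ (t i)) (η (t i)) :=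
    hN i i (le_max_left N k) (le_max_left N k)
  have hηη : (t k : ℝ) - D ≤ gGP Γ (γ 0) (η (t i)) (η (t k)) := by
    have h := gGP_le_gGP_add_dist hconn (γ 0) (η 0) (η (t k)) (η (t i))
    rw [hη.gGP_eq htk hti, gGP_comm] at h
    push_cast at h
    linarith
  have hD : 0 ≤ D := by positivity
  -- the four-point condition along the chain `γ (t k), γ (t i), η (t i), η (t k)`
  have hprod : (t k : ℝ) - D - 2 * δ ≤ gGP Γ (γ 0) (γ (t k)) (η (t k)) := by
    refine le_trans ?_ (hhyp.min_sub_two_mul_le_gGP hδ _ _ (γ (t i)) (η (t i)) _)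
    rw [hγγ]
    have := le_min (by linarith : (t k : ℝ) - D ≤ t k) (le_min (hγη.trans' (by linarith)) hηη)
    linarith
  have hγk : (Γ.dist (γ 0) (γ (t k)) : ℝ) = t k := by
    simpa using hγ.dist_eq htk
  have hηk : (Γ.dist (γ 0) (η (t k)) : ℝ) ≤ D + t k := by
    have h : (Γ.dist (γ 0) (η (t k)) : ℝ) ≤ D + Γ.dist (η 0) (η (t k)) := by
      rw [hD_def]
      exact_mod_cast hconn.dist_triangle
    have hη0 := hη.dist_eq htk
    push_cast at hη0
    linarith
  rw [dist_eq_sub_two_mul_gGP (γ 0)]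
  linarith

end Gromov

lemma pow_smul_of_smul_eq_add {G V : Type*} [Monoid G] [MulAction G V] {g : G} {γ : ℤ → V}
    {m : ℕ} (htr : ∀ i : ℤ, g • γ i = γ (i + m)) (k : ℕ) (i : ℤ) :
    g ^ k • γ i = γ (i + (k * m : ℕ)) := by
  induction k generalizing i with
  | zero => simp
  | succ k ih =>
    rw [pow_succ, mul_smul, htr, ih]
    congr 1
    push_cast
    ring

theorem indices_bounded_of_same_attracting_point_general
    {V G : Type*} (Γ : SimpleGraph V)
    [Group G] [MulAction G V]
    (δ : ℝ) (hδ : 0 ≤ δ)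
    (hconn : Γ.Connected) (hlf : ∀ v : V, (Γ.neighborSet v).Finite) (hhyp : GraphHyp Γ δ)
    (hact : ∀ (g : G) (u w : V), Γ.Adj u w → Γ.Adj (g • u) (g • w))
    (g h : G) (γg γh : ℤ → V) (m : ℕ)
    (hγg : ∀ i j : ℤ, (Γ.dist (γg i) (γg j) : ℤ) = |i - j|)
    (hγh : ∀ i j : ℤ, (Γ.dist (γh i) (γh j) : ℤ) = |i - j|)
    (htrg : ∀ i : ℤ, g • γg i = γg (i + m))
    (htrh : ∀ i : ℤ, h • γh i = γh (i + m))
    (hsame : gEquivAtInf Γ (γg 0) (fun k => g ^ k • γg 0) (fun k => h ^ k • γh 0)) :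
    ∃ C : ℕ, ∀ k : ℕ,
      ((MulAction.stabilizer G (γh 0)).map (MulAut.conj (h ^ k)).toMonoidHom).relIndex
        ((MulAction.stabilizer G (γg 0)).map (MulAut.conj (g ^ k)).toMonoidHom) ≤ C := by
  have horbit_g (k : ℕ) : g ^ k • γg 0 = γg (k * m : ℕ) := by
    simpa using pow_smul_of_smul_eq_add htrg k 0
  have horbit_h (k : ℕ) : h ^ k • γh 0 = γh (k * m : ℕ) := by
    simpa using pow_smul_of_smul_eq_add htrh k 0
  obtain ⟨R, hR⟩ := exists_nat_ge (3 * (Γ.dist (γg 0) (γh 0) : ℝ) + 4 * δ)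
  have hclose : ∀ k : ℕ, Γ.dist (g ^ k • γg 0) (h ^ k • γh 0) ≤ R := by
    intro k
    rw [horbit_g, horbit_h]
    have hdist := hhyp.dist_le_of_gEquivAtInf hδ hconn hγg hγh
      (fun _ _ hab => Nat.mul_le_mul_right m hab)
      (by simpa only [horbit_g, horbit_h] using hsame) k
    exact_mod_cast hdist.trans hR
  refine ⟨{w | Γ.dist (γg 0) w ≤ R}.ncard, fun k => ?_⟩
  rw [← MulAction.stabilizer_smul_eq_stabilizer_map_conj,
    ← MulAction.stabilizer_smul_eq_stabilizer_map_conj,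
    ← SimpleGraph.ncard_setOf_dist_le_smul hconn hact (g ^ k)]
  exact SimpleGraph.relIndex_stabilizer_le_ncard hconn hlf hact (hclose k)

/-- If `g, h` act as translations (of the same translation length `m`) along bi-infinite
geodesics `γg, γh` with the same attracting boundary point, then the indices
`[gᵏ G_{u₀} g⁻ᵏ : gᵏ G_{u₀} g⁻ᵏ ∩ hᵏ G_{v₀} h⁻ᵏ]` (with `u₀ = γg 0`, `v₀ = γh 0`) are
bounded uniformly in `k`. -/
theorem indices_bounded_of_same_attracting_point
    {V G : Type*} (Γ : SimpleGraph V)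
    [Group G] [TopologicalSpace G] [IsTopologicalGroup G] [T2Space G]
    [LocallyCompactSpace G] [TotallyDisconnectedSpace G] [MulAction G V]
    (δ : ℝ) (hδ : 0 ≤ δ)
    (hconn : Γ.Connected) (hlf : ∀ v : V, (Γ.neighborSet v).Finite) (hhyp : GraphHyp Γ δ)
    (hact : ∀ (g : G) (u w : V), Γ.Adj u w → Γ.Adj (g • u) (g • w))
    (htrans : ∀ u w : V, ∃ g : G, g • u = w)
    (hstab : ∀ v : V, IsCompact ((MulAction.stabilizer G v : Subgroup G) : Set G) ∧
      IsOpen ((MulAction.stabilizer G v : Subgroup G) : Set G))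
    (g h : G) (γg γh : ℤ → V) (m : ℕ) (hm : 0 < m)
    (hγg : ∀ i j : ℤ, (Γ.dist (γg i) (γg j) : ℤ) = |i - j|)
    (hγh : ∀ i j : ℤ, (Γ.dist (γh i) (γh j) : ℤ) = |i - j|)
    (htrg : ∀ i : ℤ, g • γg i = γg (i + m))
    (htrh : ∀ i : ℤ, h • γh i = γh (i + m))
    (hsame : gEquivAtInf Γ (γg 0) (fun k => g ^ k • γg 0) (fun k => h ^ k • γh 0)) :
    ∃ C : ℕ, ∀ k : ℕ,
      ((MulAction.stabilizer G (γh 0)).map (MulAut.conj (h ^ k)).toMonoidHom).relIndex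
        ((MulAction.stabilizer G (γg 0)).map (MulAut.conj (g ^ k)).toMonoidHom) ≤ C :=
  indices_bounded_of_same_attracting_point_general Γ δ hδ hconn hlf hhyp hact g h γg γh m hγg hγh
    htrg htrh hsame
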